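/- arXiv:2104.12355 — 2 statements merged into one kernel-verified Lean document; each statement's English description precedes it below -/
import Mathlib

section
/- For every λ ∈ ℝ and every δ ∈ (0, π/2), there exist at most 4 points y₁,…,y_n ∈ [0, 2π) such that for all y ∈ [0,2π) with |y - y_j| ≥ δ for every j, one has |sin y - λ| ≥ c₁ δ², where c₁ > 0 is a universal constant. -/
open Real

/-!
If `a = arcsin λ'`, where `λ'` is `λ` clamped to `[-1, 1]`, then
`sin z - sin a = 2 sin ((z - a) / 2) cos ((z + a) / 2)`, and by Jordan's inequality each factor is
at least `δ / π` in absolute value once `z` is `δ`-far from the solutions `a + 2kπ` and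
`π - a + 2kπ`. In `[0, 2π)` only `a mod 2π` and `π - a` matter, provided `z` also stays away from
the wrap-around point; the points `0` and `2π - δ` confine `z` to `[δ, 2π - 2δ]`.
-/

lemma two_div_pi_mul_le_abs_sin {x d : ℝ} (h : ∀ k : ℤ, d ≤ |x - k * π|) :
    2 / π * d ≤ |sin x| := by
  set k := round (x / π)
  have hr : |x - k * π| ≤ π / 2 := by
    have := mul_le_mul_of_nonneg_right (abs_sub_round (x / π)) pi_pos.le
    rwa [← abs_of_pos pi_pos, ← abs_mul, abs_of_pos pi_pos, sub_mul,
      div_mul_cancel₀ _ pi_ne_zero, one_div_mul_eq_div] at this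
  calc 2 / π * d ≤ 2 / π * |x - k * π| := by gcongr; exact h k
    _ ≤ sin |x - k * π| := mul_le_sin (abs_nonneg _) hr
    _ = |sin (x - k * π)| := (abs_sin_eq_sin_abs_of_abs_le_pi (by linarith [pi_pos])).symm
    _ = |sin x| := by rw [sin_sub_int_mul_pi, abs_mul, abs_neg_one_zpow, one_mul]

lemma two_div_sq_pi_mul_sq_le_abs_sin_sub_sin {a z δ : ℝ} (hδ : 0 ≤ δ)
    (h₁ : ∀ k : ℤ, δ ≤ |z - (a + 2 * k * π)|) (h₂ : ∀ k : ℤ, δ ≤ |z - (π - a + 2 * k * π)|) :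
    2 / π ^ 2 * δ ^ 2 ≤ |sin z - sin a| := by
  have hsin : 2 / π * (δ / 2) ≤ |sin ((z - a) / 2)| := two_div_pi_mul_le_abs_sin fun k => by
    rw [show (z - a) / 2 - k * π = (z - (a + 2 * k * π)) / 2 by ring, abs_div, abs_two]
    linarith [h₁ k]
  have hcos : 2 / π * (δ / 2) ≤ |cos ((z + a) / 2)| := by
    rw [← sin_pi_div_two_sub]
    refine two_div_pi_mul_le_abs_sin fun k => ?_
    rw [show π / 2 - (z + a) / 2 - k * π = -(z - (π - a + 2 * ((-k : ℤ) : ℝ) * π)) / 2 by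
      push_cast; ring, abs_div, abs_neg, abs_two]
    linarith [h₂ (-k)]
  have : 0 ≤ 2 / π * (δ / 2) := by positivity
  calc 2 / π ^ 2 * δ ^ 2 = 2 * (2 / π * (δ / 2)) * (2 / π * (δ / 2)) := by ring
    _ ≤ 2 * |sin ((z - a) / 2)| * |cos ((z + a) / 2)| := by gcongr
    _ = |sin z - sin a| := by rw [sin_sub_sin, abs_mul, abs_mul, abs_two]

section RootsInOnePeriod

variable {a z δ : ℝ} (hδ : 0 ≤ δ) (ha₀ : -(π / 2) ≤ a) (ha₁ : a ≤ π / 2) (hz₀ : δ ≤ z) (hz₁ : z ≤ 2 * π - 2 * δ)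
include hδ ha₀ ha₁ hz₀ hz₁

lemma le_abs_sub_add_two_int_mul_pi (h : δ ≤ |z - if a < 0 then a + 2 * π else a|) (k : ℤ) :
    δ ≤ |z - (a + 2 * k * π)| := by
  have hπ := pi_pos
  rcases (by omega : k ≤ -1 ∨ k = 0 ∨ k = 1 ∨ 2 ≤ k) with hk | rfl | rfl | hk
  · have : (k : ℝ) ≤ -1 := by exact_mod_cast hk
    exact le_abs.mpr (Or.inl (by nlinarith))
  · split_ifs at h with ha
    · exact le_abs.mpr (Or.inl (by push_cast; linarith))
    · simpa using h
  · split_ifs at h with ha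
    · simpa [mul_comm] using h
    · exact le_abs.mpr (Or.inr (by push_cast; linarith))
  · have : (2 : ℝ) ≤ k := by exact_mod_cast hk
    exact le_abs.mpr (Or.inr (by nlinarith))

lemma le_abs_sub_pi_sub_add_two_int_mul_pi (h : δ ≤ |z - (π - a)|) (k : ℤ) :
    δ ≤ |z - (π - a + 2 * k * π)| := by
  have hπ := pi_pos
  rcases (by omega : k ≤ -1 ∨ k = 0 ∨ 1 ≤ k) with hk | rfl | hk
  · have : (k : ℝ) ≤ -1 := by exact_mod_cast hk
    exact le_abs.mpr (Or.inl (by nlinarith))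
  · simpa using h
  · have : (1 : ℝ) ≤ k := by exact_mod_cast hk
    exact le_abs.mpr (Or.inr (by nlinarith))

end RootsInOnePeriod

lemma abs_sub_max_min_le_abs_sub {lo hi s l : ℝ} (hlo : lo ≤ s) (hhi : s ≤ hi) :
    |s - max lo (min hi l)| ≤ |s - l| := by
  rcases le_total hi l with h | h
  · rw [min_eq_left h, max_eq_right (hlo.trans hhi), abs_of_nonpos (sub_nonpos.2 hhi)]
    exact le_abs.mpr (Or.inr (by linarith))
  rw [min_eq_right h]
  rcases le_total lo l with h' | h'
  · rw [max_eq_right h']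
  · rw [max_eq_left h', abs_of_nonneg (sub_nonneg.2 hlo)]
    exact le_abs.mpr (Or.inl (by linarith))

theorem stmt_1 :
    ∃ c₁ : ℝ, 0 < c₁ ∧
      ∀ (lam : ℝ) (δ : ℝ), 0 < δ → δ < π / 2 →
        ∃ (n : ℕ) (y : Fin n → ℝ), n ≤ 4 ∧ (∀ j, y j ∈ Set.Ico (0 : ℝ) (2 * π)) ∧
          ∀ z ∈ Set.Ico (0 : ℝ) (2 * π), (∀ j, δ ≤ |z - y j|) →
            c₁ * δ ^ 2 ≤ |Real.sin z - lam| := by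
  refine ⟨2 / π ^ 2, by positivity, fun lam δ hδ hδπ => ?_⟩
  have hπ := pi_pos
  set a := arcsin (max (-1) (min 1 lam))
  have ha₀ : -(π / 2) ≤ a := neg_pi_div_two_le_arcsin _
  have ha₁ : a ≤ π / 2 := arcsin_le_pi_div_two _
  refine ⟨4, ![if a < 0 then a + 2 * π else a, π - a, 0, 2 * π - δ], le_rfl, ?_,
    fun z ⟨hz₀, hz₂π⟩ hfar => ?_⟩
  · intro j
    fin_cases j <;> simp only [Set.mem_Ico] <;> (try split_ifs) <;> constructor <;> simp <;>
      linarith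
  have hδz : δ ≤ z := by simpa [abs_of_nonneg hz₀] using hfar 2
  have hz₁ : z ≤ 2 * π - 2 * δ := by
    rcases le_abs'.mp (hfar 3) with h | h <;> simp only [Matrix.cons_val] at h <;> linarith
  calc 2 / π ^ 2 * δ ^ 2 ≤ |sin z - sin a| :=
        two_div_sq_pi_mul_sq_le_abs_sin_sub_sin hδ.le
          (le_abs_sub_add_two_int_mul_pi hδ.le ha₀ ha₁ hδz hz₁ (hfar 0))
          (le_abs_sub_pi_sub_add_two_int_mul_pi hδ.le ha₀ ha₁ hδz hz₁ (hfar 1))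
    _ ≤ |sin z - lam| := by
      rw [sin_arcsin (le_max_left _ _) (max_le (by norm_num) (min_le_left _ _))]
      exact abs_sub_max_min_le_abs_sub (neg_one_le_sin z) (sin_le_one z)
end

section
/- Suppose a ≥ 0 satisfies the differential inequality (d/dt) x(t) ≤ -c x(t)(x(t)² - A)(x(t) + √A·B)/M⁴ + g'(t) for constants c, A, B, M > 0, with g nondecreasing, g(0) = 0, g bounded by G. Then x(t) ≤ max(x(0), √A) + G for all t ≥ 0. -/
open Real Set

/-!
Since `g ≥ 0`, whenever `x - g` exceeds `√A` so does `x`, and then the cubic damping term is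
nonpositive, so `(x - g)' ≤ 0`. Hence `x - g` can never climb above `max (x 0) √A`, and `g ≤ G`
gives the bound.
-/

theorem image_le_max_of_deriv_right_nonpos_above {f f' : ℝ → ℝ} {a b K : ℝ}
    (hf : ContinuousOn f (Icc a b)) (hf' : ∀ x ∈ Ico a b, HasDerivWithinAt f (f' x) (Ici x) x)
    (bound : ∀ x ∈ Ico a b, K < f x → f' x ≤ 0) :
    ∀ ⦃x⦄, x ∈ Icc a b → f x ≤ max (f a) K := by
  set m := max (f a) K
  -- Fence with the barriers `m + r (x - a + 1)`, which start strictly above `K` and rise strictly.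
  have fence : ∀ x ∈ Icc a b, ∀ r > 0, f x ≤ m + r * (x - a + 1) := fun x hx r hr => by
    refine image_le_of_deriv_right_lt_deriv_boundary hf hf'
      (B := fun y => m + r * (y - a + 1)) (B' := fun _ => r) ?_ ?_ ?_ hx
    · nlinarith [le_max_left (f a) K]
    · intro y
      simpa using (((hasDerivAt_id y).sub_const a).add_const 1).const_mul r |>.const_add m
    · intro y hy hfy
      have hK : K < f y := by
        rw [hfy]
        nlinarith [le_max_right (f a) K, hy.1]
      linarith [bound y hy hK]
  intro x hx
  have : ContinuousWithinAt (fun r => m + r * (x - a + 1)) (Ioi 0) 0 := by fun_prop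
  convert! continuousWithinAt_const.closure_le _ this (fence x hx) using 1 <;> simp

theorem cubic_damping_nonpos {c A B M x : ℝ} (hc : 0 ≤ c) (hB : 0 ≤ B) (hx : √A < x) :
    -c * x * (x ^ 2 - A) * (x + √A * B) / M ^ 4 ≤ 0 := by
  have hx0 : 0 < x := (sqrt_nonneg A).trans_lt hx
  have hxA : 0 < x ^ 2 - A := sub_pos.2 (lt_sq_of_sqrt_lt hx)
  have hxB : 0 < x + √A * B := by positivity
  apply div_nonpos_of_nonpos_of_nonneg _ (by positivity)
  have := mul_nonneg (mul_nonneg (mul_nonneg hc hx0.le) hxA.le) hxB.le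
  linarith

theorem stmt_13_general (c A B M G : ℝ) (hc : 0 < c) (hB : 0 < B)
    (x g : ℝ → ℝ) (x' g' : ℝ → ℝ)
    (hxd : ∀ t, 0 ≤ t → HasDerivAt x (x' t) t)
    (hgd : ∀ t, 0 ≤ t → HasDerivAt g (g' t) t)
    (hgmono : MonotoneOn g (Set.Ici 0))
    (hg0 : g 0 = 0) (hgG : ∀ t, 0 ≤ t → g t ≤ G)
    (hode : ∀ t, 0 ≤ t →
      x' t ≤ -c * x t * ((x t) ^ 2 - A) * (x t + Real.sqrt A * B) / M ^ 4 + g' t) :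
    ∀ t, 0 ≤ t → x t ≤ max (x 0) (Real.sqrt A) + G := by
  intro t ht
  have hderiv : ∀ s, 0 ≤ s → HasDerivAt (fun s => x s - g s) (x' s - g' s) s :=
    fun s hs => (hxd s hs).sub (hgd s hs)
  have hg_nonneg : ∀ s, 0 ≤ s → 0 ≤ g s := fun s hs => hg0 ▸ hgmono self_mem_Ici hs hs
  have hdecay : ∀ s ∈ Ico 0 t, √A < x s - g s → x' s - g' s ≤ 0 := fun s hs hK => by
    have hxs : √A < x s := by linarith [hg_nonneg s hs.1]
    linarith [hode s hs.1, cubic_damping_nonpos (M := M) hc.le hB.le hxs]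
  have hkernel : x t - g t ≤ max (x 0 - g 0) √A :=
    image_le_max_of_deriv_right_nonpos_above
      (fun s hs => (hderiv s hs.1).continuousAt.continuousWithinAt)
      (fun s hs => (hderiv s hs.1).hasDerivWithinAt) hdecay ⟨ht, le_rfl⟩
  rw [hg0, sub_zero] at hkernel
  linarith [hgG t ht]

theorem stmt_13 (c A B M G : ℝ) (hc : 0 < c) (hA : 0 < A) (hB : 0 < B) (hM : 0 < M)
    (x g : ℝ → ℝ) (x' g' : ℝ → ℝ)
    (hx0 : ∀ t, 0 ≤ t → 0 ≤ x t)
    (hxd : ∀ t, 0 ≤ t → HasDerivAt x (x' t) t)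
    (hgd : ∀ t, 0 ≤ t → HasDerivAt g (g' t) t)
    (hgmono : MonotoneOn g (Set.Ici 0))
    (hg0 : g 0 = 0) (hgG : ∀ t, 0 ≤ t → g t ≤ G)
    (hode : ∀ t, 0 ≤ t →
      x' t ≤ -c * x t * ((x t) ^ 2 - A) * (x t + Real.sqrt A * B) / M ^ 4 + g' t) :
    ∀ t, 0 ≤ t → x t ≤ max (x 0) (Real.sqrt A) + G :=
  stmt_13_general c A B M G hc hB x g x' g' hxd hgd hgmono hg0 hgG hode
end
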